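/- arXiv:0911.3803 — 4 statements merged into one kernel-verified Lean document; each statement's English description precedes it below -/
import Mathlib

section
/- Let K be the complete bipartite graph K_{2,∞} with one partition class of size 2 and the other countably infinite, and let K' be the graph obtained from K by deleting one edge. Then K and K' are weak twins: they are not isomorphic, yet there exist injective graph homomorphisms K → K' and K' → K. -/
/-!
Every vertex of `K_{2,∞}` has at least two neighbours, while in `K_{2,∞}` minus the edge
`a₀b₀` the vertex `b₀` has only one, so the two graphs are not isomorphic. Deleting edges
gives the injective homomorphism in one direction; in the other, shifting the infinite
class by one frees `b₀`, so the image of `K_{2,∞}` never uses the deleted edge.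
-/

/-- The complete bipartite graph `K_{2,∞}`, with one partition class of size two and
the other countably infinite. -/
def K2inf : SimpleGraph (Fin 2 ⊕ ℕ) := completeBipartiteGraph (Fin 2) ℕ

/-- `K_{2,∞}` minus one edge. -/
def K2infMinusEdge : SimpleGraph (Fin 2 ⊕ ℕ) :=
  K2inf.deleteEdges {s(Sum.inl 0, Sum.inr 0)}

namespace SimpleGraph

variable {V W : Type*} {G : SimpleGraph V} {H : SimpleGraph W}

theorem Iso.not_nonempty_of_neighborSet_subsingleton
    (hG : ∀ v, (G.neighborSet v).Nontrivial) (w : W) (hw : (H.neighborSet w).Subsingleton) :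
    ¬ Nonempty (G ≃g H) := by
  rintro ⟨e⟩
  have hpreimage : G.neighborSet (e.symm w) = e ⁻¹' H.neighborSet w := by
    ext v
    simp [← e.map_adj_iff (v := e.symm w)]
  exact (hG (e.symm w)).not_subsingleton (hpreimage ▸ hw.preimage e.injective)

def Hom.toDeleteEdges (f : G →g H) (s : Set (Sym2 W))
    (hs : ∀ ⦃u v⦄, G.Adj u v → s(f u, f v) ∉ s) : G →g H.deleteEdges s where
  toFun := f
  map_rel' huv := (deleteEdges_adj ..).2 ⟨f.map_adj huv, hs huv⟩

def completeBipartiteGraph.sumMapHom {V' W' : Type*} (f : V → V') (g : W → W') :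
    completeBipartiteGraph V W →g completeBipartiteGraph V' W' where
  toFun := Sum.map f g
  map_rel' := by simp [Sum.isLeft_map, Sum.isRight_map]

end SimpleGraph

open SimpleGraph

theorem K2inf_neighborSet_nontrivial (v : Fin 2 ⊕ ℕ) : (K2inf.neighborSet v).Nontrivial := by
  rcases v with a | n
  · exact ⟨Sum.inr 0, by simp [K2inf], Sum.inr 1, by simp [K2inf], by simp⟩
  · exact ⟨Sum.inl 0, by simp [K2inf], Sum.inl 1, by simp [K2inf], by simp⟩

theorem K2infMinusEdge_neighborSet_inr_zero :
    K2infMinusEdge.neighborSet (Sum.inr 0) = {Sum.inl 1} := by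
  ext (a | n)
  · fin_cases a <;> simp [K2infMinusEdge, K2inf]
  · simp [K2infMinusEdge, K2inf]

def K2infShift : K2inf →g K2infMinusEdge :=
  (completeBipartiteGraph.sumMapHom id Nat.succ).toDeleteEdges _ <| by
    rintro (a | m) (b | n) _ <;> simp [completeBipartiteGraph.sumMapHom]

theorem K2infShift_injective : Function.Injective K2infShift :=
  Sum.map_injective.2 ⟨Function.injective_id, Nat.succ_injective⟩

/-- `K_{2,∞}` and `K_{2,∞}` minus an edge are weak twins: not isomorphic, but with
injective graph homomorphisms in both directions. -/
theorem K2inf_deleteEdge_weakTwins :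
    ¬ Nonempty (K2inf ≃g K2infMinusEdge) ∧
    (∃ f : K2inf →g K2infMinusEdge, Function.Injective f) ∧
    (∃ g : K2infMinusEdge →g K2inf, Function.Injective g) := by
  refine ⟨?_, ⟨K2infShift, K2infShift_injective⟩, ⟨.ofLE (deleteEdges_le _), Function.injective_id⟩⟩
  refine Iso.not_nonempty_of_neighborSet_subsingleton K2inf_neighborSet_nontrivial (Sum.inr 0) ?_
  rw [K2infMinusEdge_neighborSet_inr_zero]
  exact Set.subsingleton_singleton
end

section
/- The complete bipartite graph K_{2,∞} has no strong twin: every graph H for which there exist graph embeddings K_{2,∞} → H and H → K_{2,∞} is isomorphic to K_{2,∞}. -/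
namespace SimpleGraph

variable {α β α' β' : Type*}

def Iso.induceCompleteBipartiteGraph (s : Set (α ⊕ β)) :
    (completeBipartiteGraph α β).induce s ≃g
      completeBipartiteGraph {a // Sum.inl a ∈ s} {b // Sum.inr b ∈ s} where
  __ := Equiv.subtypeSum
  map_rel_iff' := by rintro ⟨a | b, ha⟩ ⟨a' | b', hb⟩ <;> simp [Equiv.subtypeSum]

theorem Embedding.exists_apply_inl_eq_inl [Finite α'] [Infinite β]
    (e : completeBipartiteGraph α β ↪g completeBipartiteGraph α' β') (a : α) :
    ∃ a', e (.inl a) = .inl a' := by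
  by_contra! hright
  -- every `e (inr b)` is adjacent to the right vertex `e (inl a)`, so the infinite `β`
  -- would inject into the finite `α'`
  have hleft (b : β) : ∃ a', e (.inr b) = .inl a' := by
    have hadj := e.map_adj_iff.mpr
      (show (completeBipartiteGraph α β).Adj (.inl a) (.inr b) by simp)
    revert hright hadj
    cases e (.inl a) <;> cases e (.inr b) <;> simp
  choose σ hσ using hleft
  refine not_injective_infinite_finite σ fun b b' h => ?_
  simpa using e.injective (show e (.inr b) = e (.inr b') by rw [hσ, hσ, h])

theorem Embedding.inl_mem_range [Finite α] [Infinite β]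
    (e : completeBipartiteGraph α β ↪g completeBipartiteGraph α β') (a : α) :
    Sum.inl a ∈ Set.range e := by
  choose σ hσ using e.exists_apply_inl_eq_inl
  have hσinj : Function.Injective σ := fun a₁ a₂ h => by
    simpa using e.injective (show e (.inl a₁) = e (.inl a₂) by rw [hσ, hσ, h])
  obtain ⟨a₀, rfl⟩ := Finite.injective_iff_surjective.mp hσinj a
  exact ⟨.inl a₀, hσ a₀⟩

end SimpleGraph

open SimpleGraph

/-- `K_{2,∞}` has no strong twin: any graph that embeds into `K_{2,∞}` and into
which `K_{2,∞}` embeds is isomorphic to `K_{2,∞}`. -/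
theorem K2inf_no_strongTwin {W : Type*} (H : SimpleGraph W)
    (h₁ : Nonempty (K2inf ↪g H)) (h₂ : Nonempty (H ↪g K2inf)) :
    Nonempty (H ≃g K2inf) := by
  obtain ⟨f⟩ := h₁
  obtain ⟨g⟩ := h₂
  have hleft (a : Fin 2) : Sum.inl a ∈ Set.range g :=
    Set.range_comp_subset_range f g ((g.comp f).inl_mem_range a)
  let S := {b : ℕ // Sum.inr b ∈ Set.range g}
  let φ : H ≃g completeBipartiteGraph (Fin 2) S :=
    g.isoInduceRange.trans ((Iso.induceCompleteBipartiteGraph _).trans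
      (completeBipartiteGraphCongr (Equiv.subtypeUnivEquiv hleft) (Equiv.refl _)))
  have : Infinite W := Infinite.of_injective f f.injective
  have : Infinite S := (infinite_sum.mp (φ.toEquiv.infinite_iff.mp this)).resolve_left
    (not_infinite_iff_finite.mpr inferInstance)
  obtain ⟨_⟩ := nonempty_denumerable S
  exact ⟨φ.trans (completeBipartiteGraphCongr (Equiv.refl _) (Denumerable.eqv S))⟩
end

section
/- The infinite star has no connected weak twin: every connected graph H for which there exist injective graph homomorphisms from the infinite star to H and from H to the infinite star is isomorphic to the infinite star. -/
/-!
Every edge of the star contains its centre, so pulling the centre back along the injective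
homomorphism `H →g InfStar` gives a single vertex `c` of `H` covering all edges of `H`. By
connectedness every other vertex is then adjacent to `c`, so `H` is the star with centre `c`;
the two embeddings make `H` countably infinite, hence so is its set of leaves.
-/

/-- The infinite star `K_{1,∞}`: one centre vertex joined to countably infinitely
many leaves, and no other edges. -/
def InfStar : SimpleGraph (Unit ⊕ ℕ) := completeBipartiteGraph Unit ℕ

namespace SimpleGraph

variable {V W : Type*} {G : SimpleGraph V} {H : SimpleGraph W}

theorem completeBipartiteGraph_isVertexCover_range_inl (α β : Type*) :
    (completeBipartiteGraph α β).IsVertexCover (Set.range Sum.inl) := by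
  rintro (a | b) (a' | b') h <;> simp_all

theorem IsVertexCover.exists_singleton_of_injective {x : W} (hx : H.IsVertexCover {x})
    (g : G →g H) (hg : Function.Injective g) {a b : V} (hab : G.Adj a b) :
    ∃ c, G.IsVertexCover {c} := by
  have hpre : G.IsVertexCover (g ⁻¹' {x}) := hx.preimage g
  obtain ⟨c, hc⟩ : ∃ c, g c = x := by
    rcases hpre hab with h | h
    exacts [⟨a, h⟩, ⟨b, h⟩]
  refine ⟨c, hpre.subset fun v hv => hg ?_⟩
  rw [Set.mem_preimage, Set.mem_singleton_iff] at hv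
  exact hv.trans hc.symm

theorem Preconnected.adj_of_isVertexCover_singleton (hG : G.Preconnected) {c w : V}
    (hc : G.IsVertexCover {c}) (hw : w ≠ c) : G.Adj c w := by
  obtain ⟨p⟩ := hG w c
  cases p with
  | nil => exact absurd rfl hw
  | cons h _ =>
    rcases hc h with h' | h'
    · exact absurd h' hw
    · exact (h' ▸ h).symm

noncomputable def Preconnected.completeBipartiteGraphIsoOfIsVertexCover [DecidableEq V]
    (hG : G.Preconnected) {c : V} (hc : G.IsVertexCover {c}) :
    completeBipartiteGraph Unit {w // w ≠ c} ≃g G where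
  toEquiv := (Equiv.sumCongr (Equiv.ofUnique _ _) (Equiv.refl _)).trans (Equiv.sumCompl (· = c))
  map_rel_iff' := by
    have hcentre : ∀ u : {w // w = c}, (u : V) = c := Subtype.prop
    rintro (u | ⟨w, hw⟩) (u' | ⟨w', hw'⟩)
    · simp
    · simpa [hcentre] using hG.adj_of_isVertexCover_singleton hc hw'
    · simpa [hcentre] using (hG.adj_of_isVertexCover_singleton hc hw).symm
    · simpa using fun h => (hc h).elim hw hw'

end SimpleGraph

open SimpleGraph in
/-- The infinite star has no connected weak twin: every connected graph `H` with
injective graph homomorphisms from the star to `H` and from `H` to the star is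
isomorphic to the star. -/
theorem infStar_no_connected_weakTwin {W : Type*} (H : SimpleGraph W)
    (hHc : H.Connected)
    (h₁ : ∃ f : InfStar →g H, Function.Injective f)
    (h₂ : ∃ g : H →g InfStar, Function.Injective g) :
    Nonempty (H ≃g InfStar) := by
  classical
  obtain ⟨f, hf⟩ := h₁
  obtain ⟨g, hg⟩ := h₂
  have hcentre : InfStar.IsVertexCover {Sum.inl ()} := by
    simpa [InfStar, Set.range_unique] using completeBipartiteGraph_isVertexCover_range_inl Unit ℕ
  obtain ⟨c, hc⟩ := hcentre.exists_singleton_of_injective g hg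
    (f.map_adj (show InfStar.Adj (.inl ()) (.inr 0) by simp [InfStar]))
  have : Infinite W := .of_injective f hf
  have : Countable W := hg.countable
  have : Infinite {w // w ≠ c} := (Set.finite_singleton c).infinite_compl.to_subtype
  obtain ⟨_⟩ := nonempty_denumerable {w // w ≠ c}
  exact ⟨(hHc.preconnected.completeBipartiteGraphIsoOfIsVertexCover hc).symm.trans
    (completeBipartiteGraphCongr (.refl _) (Denumerable.eqv _))⟩
end

section
/- If a graph G has a weak twin, then G is isomorphic to a proper subgraph of itself; more precisely, there exists an injective graph homomorphism from G to G that is not a graph isomorphism. -/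
/-!
The witness is `g ∘ f` for injective homomorphisms `f : G → H` and `g : H → G`. Were it an
automorphism `e` of `G`, then `f` would be bijective because `g` is injective, and `f` would
reflect adjacency because `e` does, so `f` would be an isomorphism `G ≃g H`.
-/

/-- Two graphs are weak twins if they are non-isomorphic and there are injective
graph homomorphisms in both directions. -/
def SimpleGraph.WeakTwins {V W : Type*} (G : SimpleGraph V) (H : SimpleGraph W) : Prop :=
  ¬ Nonempty (G ≃g H) ∧ (∃ f : G →g H, Function.Injective f) ∧
    (∃ g : H →g G, Function.Injective g)

namespace SimpleGraph

open Function

variable {U V W : Type*} {G : SimpleGraph U} {H : SimpleGraph V} {K : SimpleGraph W}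

theorem Hom.map_adj_iff_of_comp_eq_iso (f : G →g H) (g : H →g K) (e : G ≃g K)
    (he : ⇑e = g ∘ f) {a b : U} : H.Adj (f a) (f b) ↔ G.Adj a b :=
  ⟨fun hab ↦ e.map_adj_iff.mp (by rw [he]; exact g.map_adj hab), f.map_adj⟩

theorem Hom.bijective_of_comp_eq_iso (f : G →g H) (g : H →g K) (hg : Injective g)
    (e : G ≃g K) (he : ⇑e = g ∘ f) : Bijective f := by
  have hgf : Bijective (g ∘ f) := he ▸ e.bijective
  exact ⟨hgf.injective.of_comp, hgf.surjective.of_comp_left hg⟩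

theorem Hom.nonempty_iso_of_comp_eq_iso (f : G →g H) (g : H →g K) (hg : Injective g)
    (e : G ≃g K) (he : ⇑e = g ∘ f) : Nonempty (G ≃g H) :=
  ⟨⟨Equiv.ofBijective f (f.bijective_of_comp_eq_iso g hg e he),
    f.map_adj_iff_of_comp_eq_iso g e he⟩⟩

end SimpleGraph

/-- If a graph has a weak twin, then it admits an injective self-homomorphism that
is not a graph isomorphism (so it is isomorphic to a proper subgraph of itself). -/
theorem weakTwin_self_embedding {V W : Type*} (G : SimpleGraph V)
    (H : SimpleGraph W) (h : G.WeakTwins H) :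
    ∃ f : G →g G, Function.Injective f ∧ ¬ ∃ e : G ≃g G, ⇑e = ⇑f := by
  obtain ⟨hnotIso, ⟨f, hf⟩, ⟨g, hg⟩⟩ := h
  refine ⟨g.comp f, hg.comp hf, ?_⟩
  rintro ⟨e, he⟩
  exact hnotIso (f.nonempty_iso_of_comp_eq_iso g hg e he)
end
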